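/- Let K be an algebraically closed field and {x_α}_{α∈A} a set of indeterminates with |K| > |A|. If i is a proper ideal of the polynomial ring K[x_α : α∈A], then i has a zero with all coordinates in K, i.e., there exists a point a ∈ K^A with p(a) = 0 for all p ∈ i. -/

import Mathlib

/-!
Enlarge `i` to a maximal ideal `m`. The residue field `L = K[x_α] ⧸ m` is algebraic over `K`:
for finitely many variables this is Zariski's lemma (`K[x_α]` is a Jacobson ring), and otherwise a
transcendental `t ∈ L` would make the `|K|` elements `(t - c)⁻¹`, `c ∈ K`, linearly independent,
while `dim_K L ≤ dim_K K[x_α] = |A| < |K|`. Being algebraic, `L` embeds over `K` into the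
algebraically closed field `K`, and the images of the `x_α` form a zero of `m ⊇ i`.
-/

open Cardinal

theorem Algebra.IsAlgebraic.of_lift_rank_lt_lift_card {K : Type u} {L : Type v} [Field K]
    [Field L] [Algebra K L] (h : lift.{u} (Module.rank K L) < lift.{v} #K) :
    Algebra.IsAlgebraic K L := by
  by_contra hna
  obtain ⟨x, hx⟩ :=
    Algebra.transcendental_def.mp (Algebra.transcendental_iff_not_isAlgebraic.2 hna)
  exact h.not_ge hx.linearIndependent_sub_inv.cardinal_lift_le_rank

namespace MvPolynomial

theorem rank_eq_card_of_infinite {K A : Type u} [Field K] [Infinite A] :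
    Module.rank K (MvPolynomial A K) = #A := by
  rw [rank_eq, mk_finsupp_nat, max_eq_left (aleph0_le_mk A)]

theorem isAlgebraic_quotient_of_card_lt {K A : Type u} [Field K] {m : Ideal (MvPolynomial A K)}
    [m.IsMaximal] (hA : #A < #K) : Algebra.IsAlgebraic K (MvPolynomial A K ⧸ m) := by
  let := Ideal.Quotient.field m
  cases finite_or_infinite A
  · rw [Algebra.isAlgebraic_iff_isIntegral, ← algebraMap_isIntegral_iff]
    exact comp_C_integral_of_surjective_of_isJacobsonRing _ Ideal.Quotient.mk_surjective
  · have hrank : Module.rank K (MvPolynomial A K ⧸ m) ≤ Module.rank K (MvPolynomial A K) :=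
      LinearMap.rank_le_of_surjective (Ideal.Quotient.mkₐ K m).toLinearMap
        Ideal.Quotient.mk_surjective
    refine .of_lift_rank_lt_lift_card ?_
    rw [lift_id, lift_id]
    exact hrank.trans_lt (rank_eq_card_of_infinite.trans_lt hA)

theorem exists_aeval_eq_zero_of_isAlgebraic_quotient {K Ω σ : Type*} [Field K] [Field Ω]
    [IsAlgClosed Ω] [Algebra K Ω] {m : Ideal (MvPolynomial σ K)} [m.IsMaximal]
    [Algebra.IsAlgebraic K (MvPolynomial σ K ⧸ m)] : ∃ a : σ → Ω, ∀ p ∈ m, aeval a p = 0 := by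
  let := Ideal.Quotient.field m
  let φ := (IsAlgClosed.lift : MvPolynomial σ K ⧸ m →ₐ[K] Ω).comp (Ideal.Quotient.mkₐ K m)
  refine ⟨φ ∘ X, fun p hp => ?_⟩
  rw [← aeval_unique φ]
  simp [φ, Ideal.Quotient.eq_zero_iff_mem.2 hp]

end MvPolynomial

theorem stmt5 (K : Type u) [Field K] [IsAlgClosed K] (A : Type u)
    (hcard : Cardinal.mk A < Cardinal.mk K)
    (i : Ideal (MvPolynomial A K)) (hi : i ≠ ⊤) :
    ∃ a : A → K, ∀ p ∈ i, MvPolynomial.eval a p = 0 := by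
  obtain ⟨m, hm, him⟩ := Ideal.exists_le_maximal i hi
  have := MvPolynomial.isAlgebraic_quotient_of_card_lt (m := m) hcard
  obtain ⟨a, ha⟩ :=
    MvPolynomial.exists_aeval_eq_zero_of_isAlgebraic_quotient (Ω := K) (m := m)
  exact ⟨a, fun p hp => by rw [← MvPolynomial.coe_aeval_eq_eval]; exact ha p (him hp)⟩
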